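/- Let m ≥ 3 be a natural number, let A be a finite set with a strict linear order <, and let B be a weakly (m−1)-wise balanced design over A. Then the chromatic number of Γ_{B,m} satisfies χ(Γ_{B,m}) ≥ (Σ_{C ∈ B} |C|) / (|A| + |B|). -/

import Mathlib

open Finset

/-- `B` is a weakly `m`-wise balanced design over the finite set `A`:
every block is a nonempty subset of `A`, every point of `A` lies in at least
one block, and any `m` pairwise distinct points of `A` are contained together
in at most one block. -/
def IsWeaklyBalancedDesign {α : Type*} [DecidableEq α] (m : ℕ)
    (A : Finset α) (B : Finset (Finset α)) : Prop :=
  (∀ C ∈ B, C ⊆ A) ∧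
  (∀ C ∈ B, C.Nonempty) ∧
  (∀ x ∈ A, ∃ C ∈ B, x ∈ C) ∧
  (∀ S : Finset α, S ⊆ A → S.card = m → (B.filter fun C => S ⊆ C).card ≤ 1)

/-- The vertex set of `Γ_{B,m}`: all incidence pairs `(x, C)` with `x ∈ C ∈ B`. -/
def designVerts {α : Type*} [DecidableEq α] (B : Finset (Finset α)) :
    Finset (α × Finset α) :=
  B.biUnion fun C => C.image fun x => (x, C)

/-- The graph `Γ_{B,m}` on incidence pairs: `(x, C₁)` and `(y, C₂)` are adjacent
iff `x < y`, `C₁ ≠ C₂` and `x ∈ C₂`, or symmetrically `y < x`, `C₂ ≠ C₁` and `y ∈ C₁`. -/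
def designGraph {α : Type*} [inst : LinearOrder α] (B : Finset (Finset α)) :
    SimpleGraph (designVerts (α := α) B) where
  Adj u v :=
    (u.val.1 < v.val.1 ∧ u.val.2 ≠ v.val.2 ∧ u.val.1 ∈ v.val.2) ∨
    (v.val.1 < u.val.1 ∧ v.val.2 ≠ u.val.2 ∧ v.val.1 ∈ u.val.2)
  symm := ⟨fun u v h => by tauto⟩
  loopless := ⟨fun u h => by
    rcases h with ⟨h, _, _⟩ | ⟨h, _, _⟩ <;> exact lt_irrefl _ h⟩

/-- The independence number of a graph: the largest size of an independent set of vertices. -/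
noncomputable def indepNum {V : Type*} (G : SimpleGraph V) : ℕ :=
  sSup {n | ∃ s : Finset V, s.card = n ∧ ∀ x ∈ s, ∀ y ∈ s, ¬ G.Adj x y}

/-!
A colouring splits the vertices of `Γ_{B,m}` into independent sets, so it suffices to show that
an independent set `s` has at most `|A| + |B|` elements. Charge each vertex `(x, C) ∈ s` to the
block `C` if `x` is the largest point of a vertex of `s` lying in block `C`, and to the point
`x` otherwise. Each block is charged at most once. If two vertices `(x, C₁) ≠ (x, C₂)` were
both charged to `x`, some `(y, C₁) ∈ s` has `x < y`, and then `(x, C₂)` is adjacent to it.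
-/

open Finset

namespace SimpleGraph

theorem Colorable.card_le_mul {V : Type*} [Fintype V] {G : SimpleGraph V} {n a : ℕ}
    (hG : G.Colorable n) (hindep : ∀ s : Finset V, G.IsIndepSet (s : Set V) → #s ≤ a) :
    Fintype.card V ≤ n * a := by
  obtain ⟨f⟩ := hG
  have hfibre : ∀ i ∈ (univ : Finset (Fin n)), #{v ∈ univ | f v = i} ≤ a := fun i _ =>
    hindep _ fun u hu v hv _ huv =>
      f.valid huv ((mem_filter.1 hu).2.trans (mem_filter.1 hv).2.symm)
  simpa [mul_comm] using card_le_mul_card_image_of_maps_to (fun v _ => mem_univ (f v)) a hfibre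

end SimpleGraph

section Design

variable {α : Type*}

theorem mem_designVerts [DecidableEq α] {B : Finset (Finset α)} {p : α × Finset α} :
    p ∈ designVerts B ↔ p.2 ∈ B ∧ p.1 ∈ p.2 := by
  simp only [designVerts, mem_biUnion, mem_image]
  constructor
  · rintro ⟨C, hC, x, hx, rfl⟩
    exact ⟨hC, hx⟩
  · exact fun ⟨hC, hx⟩ => ⟨p.2, hC, p.1, hx, rfl⟩

theorem card_designVerts [DecidableEq α] (B : Finset (Finset α)) :
    #(designVerts B) = ∑ C ∈ B, #C := by
  rw [designVerts, card_biUnion]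
  · exact sum_congr rfl fun C _ => card_image_of_injective _ fun x y h => (Prod.mk.inj h).1
  · intro C₁ _ C₂ _ hne
    simp only [disjoint_left, mem_image]
    rintro _ ⟨x, _, rfl⟩ ⟨y, _, h⟩
    exact hne (Prod.mk.inj h).2.symm

variable [LinearOrder α]

theorem card_le_of_isIndepSet_designGraph {A : Finset α} {B : Finset (Finset α)}
    (hBA : ∀ C ∈ B, C ⊆ A) {s : Finset (designVerts B)}
    (hs : (designGraph B).IsIndepSet (s : Set (designVerts B))) :
    #s ≤ #A + #B := by
  classical
  have hmem : ∀ v : designVerts B, v.1.2 ∈ B ∧ v.1.1 ∈ v.1.2 := fun v => mem_designVerts.1 v.2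
  set IsTop : designVerts B → Prop := fun v => ∀ w ∈ s, w.1.2 = v.1.2 → w.1.1 ≤ v.1.1
  have htop : #(s.filter IsTop) ≤ #B := by
    refine card_le_card_of_injOn (fun v => v.1.2) (fun v _ => (hmem v).1) ?_
    intro u hu v hv hC
    obtain ⟨hu, hutop⟩ := mem_filter.1 hu
    obtain ⟨hv, hvtop⟩ := mem_filter.1 hv
    exact Subtype.ext (Prod.ext (le_antisymm (hvtop u hu hC) (hutop v hv hC.symm)) hC)
  have hrest : #(s.filter fun v => ¬IsTop v) ≤ #A := by
    refine card_le_card_of_injOn (fun v => v.1.1) (fun v _ => hBA _ (hmem v).1 (hmem v).2) ?_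
    intro u hu v hv (hx : u.1.1 = v.1.1)
    simp only [mem_coe, mem_filter, IsTop, not_forall, not_le] at hu hv
    by_contra hne
    have hC : u.1.2 ≠ v.1.2 := fun hC => hne (Subtype.ext (Prod.ext hx hC))
    obtain ⟨w, hw, hwC, hlt⟩ := hv.2
    refine hs hu.1 hw (fun huw => hC (huw ▸ hwC)) (Or.inl ⟨?_, ?_, ?_⟩)
    · exact hx ▸ hlt
    · exact hwC ▸ hC
    · exact hwC ▸ hx ▸ (hmem v).2
  calc #s = #(s.filter IsTop) + #(s.filter fun v => ¬IsTop v) :=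
        (card_filter_add_card_filter_not _).symm
    _ ≤ #B + #A := add_le_add htop hrest
    _ = #A + #B := add_comm _ _

end Design

theorem designGraph_chromaticNumber_ge_general {α : Type*} [LinearOrder α] (m : ℕ)
    (A : Finset α) (B : Finset (Finset α))
    (hB : IsWeaklyBalancedDesign (m - 1) A B) :
    ((∑ C ∈ B, C.card : ℕ) : ℝ) / ((A.card + B.card : ℕ) : ℝ) ≤
      (((designGraph B).chromaticNumber.toNat : ℕ) : ℝ) := by
  have hcount : ∑ C ∈ B, #C ≤ (designGraph B).chromaticNumber.toNat * (#A + #B) := by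
    rw [← card_designVerts, ← Fintype.card_coe]
    exact (designGraph B).colorable_chromaticNumber_of_fintype.card_le_mul
      fun s hs => card_le_of_isIndepSet_designGraph hB.1 hs
  exact div_le_of_le_mul₀ (Nat.cast_nonneg _) (Nat.cast_nonneg _) (by exact_mod_cast hcount)

/-- Let `m ≥ 3`, let `A` be a finite set with a strict linear order and let `B` be a
weakly `(m-1)`-wise balanced design over `A`. Then
`χ(Γ_{B,m}) ≥ (∑_{C ∈ B} |C|) / (|A| + |B|)`. -/
theorem designGraph_chromaticNumber_ge {α : Type*} [LinearOrder α] (m : ℕ) (hm : 3 ≤ m)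
    (A : Finset α) (B : Finset (Finset α))
    (hB : IsWeaklyBalancedDesign (m - 1) A B) :
    ((∑ C ∈ B, C.card : ℕ) : ℝ) / ((A.card + B.card : ℕ) : ℝ) ≤
      (((designGraph B).chromaticNumber.toNat : ℕ) : ℝ) :=
  designGraph_chromaticNumber_ge_general m A B hB
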